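/- For all L, M ∈ 𝐋, the set {MP : P ∈ 𝐎*(L,M)} is a singleton if and only if rk((MᵀM)_{t,t}) = rk((MᵀL)_{t,t}) for all t = 1,…,T. (Equivalently, the set {MP − L : P ∈ 𝐎*(L,M)} modulo right-multiplication by 𝐎*(L,L) is a singleton if and only if this rank condition holds; this characterizes when there exists a unique geodesic between [L] and [M].) -/

import Mathlib

open Matrix Filter Topology

/-- Square matrices of size `dT × dT`, indexed by blocks: index `(t, i)` is
row/column `i` within block `t`. -/
abbrev Mat (d T : ℕ) := Matrix (Fin T × Fin d) (Fin T × Fin d) ℝ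

/-- The `t`-th diagonal `d × d` block of a `dT × dT` matrix. -/
def blk {d T : ℕ} (A : Mat d T) (t : Fin T) : Matrix (Fin d) (Fin d) ℝ :=
  fun i j => A (t, i) (t, j)

/-- The `t`-th block column of a `dT × dT` matrix, a `dT × d` matrix. -/
def colBlk {d T : ℕ} (A : Mat d T) (t : Fin T) : Matrix (Fin T × Fin d) (Fin d) ℝ :=
  fun p j => A p (t, j)

/-- Membership in `𝐋`: block lower triangular matrices. -/
def memL {d T : ℕ} (A : Mat d T) : Prop :=
  ∀ (t s : Fin T) (i j : Fin d), t < s → A (t, i) (s, j) = 0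

/-- Membership in `𝐎`: block diagonal matrices with orthogonal `d × d` diagonal blocks
(equivalently: block diagonal and orthogonal). -/
def memO {d T : ℕ} (O : Mat d T) : Prop :=
  (∀ (t s : Fin T) (i j : Fin d), t ≠ s → O (t, i) (s, j) = 0) ∧ Oᵀ * O = 1

/-- The Frobenius norm of a real matrix. -/
noncomputable def frobNorm {m n : Type*} [Fintype m] [Fintype n] (A : Matrix m n ℝ) : ℝ :=
  Real.sqrt (∑ i, ∑ j, (A i j) ^ 2)

/-- The Frobenius inner product of two real matrices. -/
noncomputable def frobInner {m n : Type*} [Fintype m] [Fintype n] (A B : Matrix m n ℝ) : ℝ :=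
  ∑ i, ∑ j, A i j * B i j

/-- The adapted Bures–Wasserstein distance `d_ABW(L, M) = inf_{O ∈ 𝐎} ‖L - M O‖_F`. -/
noncomputable def dABW {d T : ℕ} (L M : Mat d T) : ℝ :=
  sInf {r : ℝ | ∃ O : Mat d T, memO O ∧ r = frobNorm (L - M * O)}

/-- The set `𝐎*(L, M)` of optimizers of `inf_{O ∈ 𝐎} ‖L - M O‖_F`. -/
noncomputable def OStar {d T : ℕ} (L M : Mat d T) : Set (Mat d T) :=
  {O | memO O ∧ frobNorm (L - M * O) = dABW L M}

/-- The set `𝐕(L) = {M P - L : M ∈ 𝐋, P ∈ 𝐎*(L, M)}`. -/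
noncomputable def VSet {d T : ℕ} (L : Mat d T) : Set (Mat d T) :=
  {V | ∃ M P : Mat d T, memL M ∧ P ∈ OStar L M ∧ V = M * P - L}

/-- The set `𝒱(L) = {V ∈ 𝐋 : (Vᵀ L)_{t,t} is symmetric for all t}`. -/
def calV {d T : ℕ} (L : Mat d T) : Set (Mat d T) :=
  {V | memL V ∧ ∀ t : Fin T, (blk (Vᵀ * L) t).IsSymm}

/-- The set `𝐋^reg = {L ∈ 𝐋 : (Lᵀ L)_{t,t} is positive definite for all t}`. -/
def LReg {d T : ℕ} : Set (Mat d T) :=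
  {L | memL L ∧ ∀ t : Fin T, (blk (Lᵀ * L) t).PosDef}

/-- The sum of the singular values of a real square matrix `A`,
i.e. the trace of the positive semidefinite square root of `Aᵀ A`. -/
noncomputable def svSum {n : ℕ} (A : Matrix (Fin n) (Fin n) ℝ) : ℝ :=
  ((Matrix.posSemidef_conjTranspose_mul_self A).1.eigenvectorUnitary.1 *
    diagonal ((RCLike.ofReal : ℝ → ℝ) ∘ (√·) ∘ (Matrix.posSemidef_conjTranspose_mul_self A).1.eigenvalues) *
    (star (Matrix.posSemidef_conjTranspose_mul_self A).1.eigenvectorUnitary : Matrix (Fin n) (Fin n) ℝ)).trace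

/-- The operator norm of a real matrix: the supremum of the euclidean norm `‖A x‖₂`
over the euclidean unit ball. -/
noncomputable def opNorm {m n : Type*} [Fintype m] [Fintype n] (A : Matrix m n ℝ) : ℝ :=
  sSup {r : ℝ | ∃ x : n → ℝ, (∑ j, (x j) ^ 2) ≤ 1 ∧ r = Real.sqrt (∑ i, (A.mulVec x i) ^ 2)}

/-!
Write `B_t = (MᵀL)_{t,t}`. For `O = diag(O_1, …, O_T) ∈ 𝐎` one has
`‖L - M O‖_F² = ‖L‖_F² + ‖M‖_F² - 2 ∑_t tr(O_tᵀ B_t)`, so `𝐎*(L, M)` consists of the block-diagonal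
matrices whose blocks independently maximize `Q ↦ tr(Qᵀ B_t)` over orthogonal `Q`. Hence `M P` is
unique iff for every `t` the product `N Q` does not depend on the maximizer `Q`, where `N` is the
`t`-th block column of `M`; with `C` the `t`-th block column of `L`, `NᵀN = (MᵀM)_{t,t}` and
`NᵀC = B_t`.

Take a singular system `B v_k = σ_k u_k` of `B = NᵀC`. The maximizers are exactly the orthogonal
`Q` with `Q v_k = u_k` whenever `σ_k ≠ 0`; the remaining `v_k` may go to any orthonormal basis of
the span of the remaining `u_k`. So `N Q` is unique iff `N u_k = 0` whenever `σ_k = 0`, i.e. iff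
`range Nᵀ ⊆ range B`. As `range B ⊆ range Nᵀ` always, this says `rk(NᵀN) = rk Nᵀ = rk B`.
-/

namespace Matrix

variable {ι n : Type*} [Fintype n]

lemma dotProduct_le_one {x y : n → ℝ} (hx : x ⬝ᵥ x = 1) (hy : y ⬝ᵥ y = 1) : x ⬝ᵥ y ≤ 1 := by
  have h := dotProduct_self_star_nonneg (x - y)
  simp only [star_trivial, sub_dotProduct, dotProduct_sub, hx, hy, dotProduct_comm y x] at h
  linarith

lemma eq_of_dotProduct_eq_one {x y : n → ℝ} (hx : x ⬝ᵥ x = 1) (hy : y ⬝ᵥ y = 1)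
    (hxy : x ⬝ᵥ y = 1) : x = y := by
  have h : (x - y) ⬝ᵥ (x - y) = 0 := by
    simp only [sub_dotProduct, dotProduct_sub, hx, hy, dotProduct_comm y x, hxy]; norm_num
  exact sub_eq_zero.mp (dotProduct_self_eq_zero.mp h)

lemma mulVec_dotProduct_mulVec {m : Type*} [Fintype m] (A : Matrix m n ℝ) (x y : n → ℝ) :
    (A *ᵥ x) ⬝ᵥ (A *ᵥ y) = x ⬝ᵥ (Aᵀ * A) *ᵥ y := by
  rw [← mulVec_mulVec, dotProduct_transpose_mulVec, dotProduct_comm]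

lemma mulVec_dotProduct_mulVec_of_orthogonal [DecidableEq n] {m : Type*} [Fintype m]
    {Q : Matrix m n ℝ} (hQ : Qᵀ * Q = 1) (x y : n → ℝ) : (Q *ᵥ x) ⬝ᵥ (Q *ᵥ y) = x ⬝ᵥ y := by
  rw [mulVec_dotProduct_mulVec, hQ, one_mulVec]

theorem rank_transpose_mul_self_eq_iff_range_le {m : Type*} [Fintype m] (N C : Matrix m n ℝ) :
    (Nᵀ * N).rank = (Nᵀ * C).rank ↔
      LinearMap.range Nᵀ.mulVecLin ≤ LinearMap.range (Nᵀ * C).mulVecLin := by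
  have hle : LinearMap.range (Nᵀ * C).mulVecLin ≤ LinearMap.range Nᵀ.mulVecLin := by
    rw [mulVecLin_mul]
    exact LinearMap.range_comp_le_range _ _
  rw [rank_transpose_mul_self, ← rank_transpose N]
  exact ⟨fun h => (Submodule.eq_of_le_of_finrank_le hle h.le).ge,
    fun h => by rw [rank, rank, le_antisymm h hle]⟩

variable [DecidableEq ι]

def IsOrthonormal (v : ι → n → ℝ) : Prop :=
  ∀ k l, v k ⬝ᵥ v l = if k = l then 1 else 0

namespace IsOrthonormal

variable {v : ι → n → ℝ}

lemma dotProduct_self (hv : IsOrthonormal v) (k : ι) : v k ⬝ᵥ v k = 1 := by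
  simpa using hv k k

lemma dotProduct_of_ne (hv : IsOrthonormal v) {k l : ι} (h : k ≠ l) : v k ⬝ᵥ v l = 0 := by
  simpa [h] using hv k l

lemma mulVec [DecidableEq n] {m : Type*} [Fintype m] {Q : Matrix m n ℝ} (hQ : Qᵀ * Q = 1)
    (hv : IsOrthonormal v) : IsOrthonormal fun k => Q *ᵥ v k := fun k l => by
  rw [mulVec_dotProduct_mulVec_of_orthogonal hQ, hv k l]

lemma of_mul_transpose (hv : IsOrthonormal v) : of v * (of v)ᵀ = 1 := by
  ext k l
  simpa [mul_apply, one_apply, dotProduct] using hv k l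

variable [DecidableEq n] {v u : n → n → ℝ}

lemma trace_eq_sum (hv : IsOrthonormal v) (Y : Matrix n n ℝ) :
    Y.trace = ∑ k, v k ⬝ᵥ Y *ᵥ v k := by
  have h : (of v)ᵀ * of v = 1 := mul_eq_one_comm.mp hv.of_mul_transpose
  calc Y.trace = (of v * Y * (of v)ᵀ).trace := by
        rw [trace_mul_comm, ← Matrix.mul_assoc, h, Matrix.one_mul]
    _ = ∑ k, v k ⬝ᵥ Y *ᵥ v k := Finset.sum_congr rfl fun k _ => by rw [dotProduct_mulVec]; rfl

lemma ext_mulVec {m : Type*} {A A' : Matrix m n ℝ} (hv : IsOrthonormal v)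
    (h : ∀ k, A *ᵥ v k = A' *ᵥ v k) : A = A' := by
  have h' : A * (of v)ᵀ = A' * (of v)ᵀ := by
    ext i k
    exact congrFun (h k) i
  have hV : (of v)ᵀ * of v = 1 := mul_eq_one_comm.mp hv.of_mul_transpose
  rw [← A.mul_one, ← A'.mul_one, ← hV, ← Matrix.mul_assoc, h', Matrix.mul_assoc]

lemma update_neg (hu : IsOrthonormal u) (k : n) :
    IsOrthonormal (Function.update u k (-u k)) := fun i j => by
  by_cases hi : i = k <;> by_cases hj : j = k <;>
    simp [hi, hj, hu.dotProduct_self, hu i j, hu k j, hu i k, eq_comm (a := k)]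

lemma sum_dotProduct_smul (hv : IsOrthonormal v) (x : n → ℝ) : ∑ k, (v k ⬝ᵥ x) • v k = x := by
  have h : (of v)ᵀ * of v = 1 := mul_eq_one_comm.mp hv.of_mul_transpose
  calc ∑ k, (v k ⬝ᵥ x) • v k = (of v)ᵀ *ᵥ (of v *ᵥ x) := by
        rw [mulVec_transpose, vecMul_eq_sum]; rfl
    _ = x := by rw [mulVec_mulVec, h, one_mulVec]

lemma exists_orthogonal_mulVec_eq (hv : IsOrthonormal v) (hu : IsOrthonormal u) :
    ∃ Q : Matrix n n ℝ, Qᵀ * Q = 1 ∧ ∀ k, Q *ᵥ v k = u k := by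
  refine ⟨(of u)ᵀ * of v, ?_, fun k => ?_⟩
  · rw [transpose_mul, transpose_transpose, Matrix.mul_assoc, ← Matrix.mul_assoc (of u),
      hu.of_mul_transpose, Matrix.one_mul, mul_eq_one_comm.mp hv.of_mul_transpose]
  · have hvk : of v *ᵥ v k = Pi.single k 1 := by
      ext l
      rw [Pi.single_apply]
      exact hv l k
    rw [← mulVec_mulVec, hvk, mulVec_single_one]
    rfl

end IsOrthonormal

lemma isOrthonormal_ofLp {v : ι → EuclideanSpace ℝ n} (hv : Orthonormal ℝ v) :
    IsOrthonormal fun k => (v k).ofLp := fun k l => by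
  change (v k).ofLp ⬝ᵥ (v l).ofLp = _
  rw [dotProduct_comm, ← star_trivial (v k).ofLp, ← EuclideanSpace.inner_eq_star_dotProduct]
  exact orthonormal_iff_ite.mp hv k l

variable [DecidableEq n] in
lemma exists_isOrthonormal_extension {s : Set n} {w : n → n → ℝ}
    (hw : ∀ k ∈ s, ∀ l ∈ s, w k ⬝ᵥ w l = if k = l then 1 else 0) :
    ∃ u : n → n → ℝ, IsOrthonormal u ∧ ∀ k ∈ s, u k = w k := by
  have hs : Orthonormal ℝ (s.domRestrict fun k => WithLp.toLp 2 (w k)) := by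
    rw [orthonormal_iff_ite]
    rintro ⟨k, hk⟩ ⟨l, hl⟩
    change inner ℝ (WithLp.toLp 2 (w k)) (WithLp.toLp 2 (w l)) = _
    rw [EuclideanSpace.inner_toLp_toLp, star_trivial, dotProduct_comm, hw k hk l hl]
    simp [Subtype.ext_iff]
  obtain ⟨b, hb⟩ := hs.exists_orthonormalBasis_extension_of_card_eq finrank_euclideanSpace
  exact ⟨fun k => (b k).ofLp, isOrthonormal_ofLp b.orthonormal,
    fun k hk => by simp only [hb k hk]⟩

variable [DecidableEq n]

def orthogonalTraceMaximizers (B : Matrix n n ℝ) : Set (Matrix n n ℝ) :=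
  {Q | Qᵀ * Q = 1 ∧ ∀ Q' : Matrix n n ℝ, Q'ᵀ * Q' = 1 → (Q'ᵀ * B).trace ≤ (Qᵀ * B).trace}

structure SingularSystem (B : Matrix n n ℝ) where
  σ : n → ℝ
  v : n → n → ℝ
  u : n → n → ℝ
  σ_nonneg : ∀ k, 0 ≤ σ k
  isOrthonormal_v : IsOrthonormal v
  isOrthonormal_u : IsOrthonormal u
  mulVec_v : ∀ k, B *ᵥ v k = σ k • u k

namespace SingularSystem

/-- The `v k` are eigenvectors of `Bᵀ * B`, with eigenvalues `σ k ^ 2`; the `u k` with `σ k ≠ 0`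
are the normalized `B *ᵥ v k`, completed to an orthonormal basis. -/
theorem nonempty (B : Matrix n n ℝ) : Nonempty (SingularSystem B) := by
  have hS : (Bᵀ * B).IsHermitian := by
    simpa only [conjTranspose_eq_transpose_of_trivial] using isHermitian_conjTranspose_mul_self B
  set v := fun k => (hS.eigenvectorBasis k).ofLp
  set μ := hS.eigenvalues
  have hv : IsOrthonormal v := isOrthonormal_ofLp hS.eigenvectorBasis.orthonormal
  have hBv : ∀ k l, (B *ᵥ v k) ⬝ᵥ (B *ᵥ v l) = if k = l then μ l else 0 := fun k l => by
    rw [mulVec_dotProduct_mulVec, hS.mulVec_eigenvectorBasis, dotProduct_smul, hv k l]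
    split_ifs <;> simp [μ]
  have hμ : ∀ k, 0 ≤ μ k := fun k => by
    simpa [hBv] using dotProduct_self_star_nonneg (B *ᵥ v k)
  set σ := fun k => √(μ k)
  obtain ⟨u, hu, hu_eq⟩ := exists_isOrthonormal_extension (s := {k | σ k ≠ 0})
    (w := fun k => (σ k)⁻¹ • B *ᵥ v k) fun k hk l hl => by
      simp only [smul_dotProduct, dotProduct_smul, hBv, smul_eq_mul]
      split_ifs with h
      · subst h
        have hk' : σ k ≠ 0 := hk
        have hσ : σ k ^ 2 = μ k := Real.sq_sqrt (hμ k)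
        rw [← hσ]
        field_simp
      · simp
  refine ⟨⟨σ, v, u, fun k => Real.sqrt_nonneg _, hv, hu, fun k => ?_⟩⟩
  by_cases hk : σ k = 0
  · have : μ k = 0 := by simpa [σ, Real.sqrt_eq_zero (hμ k)] using hk
    rw [hk, zero_smul, ← dotProduct_self_eq_zero, hBv, if_pos rfl, this]
  · rw [hu_eq k hk, smul_smul, mul_inv_cancel₀ hk, one_smul]

variable {B : Matrix n n ℝ} (S : SingularSystem B)

lemma transpose_mulVec_u (k : n) : Bᵀ *ᵥ S.u k = S.σ k • S.v k := by
  conv_lhs => rw [← S.isOrthonormal_v.sum_dotProduct_smul (Bᵀ *ᵥ S.u k)]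
  simp only [dotProduct_transpose_mulVec, S.mulVec_v, dotProduct_smul, S.isOrthonormal_u k,
    smul_eq_mul, mul_ite, mul_one, mul_zero, ite_smul, zero_smul]
  simp

lemma trace_transpose_mul (Q : Matrix n n ℝ) :
    (Qᵀ * B).trace = ∑ k, S.σ k * ((Q *ᵥ S.v k) ⬝ᵥ S.u k) := by
  rw [S.isOrthonormal_v.trace_eq_sum]
  refine Finset.sum_congr rfl fun k _ => ?_
  rw [← mulVec_mulVec, S.mulVec_v, mulVec_smul, dotProduct_smul, smul_eq_mul,
    dotProduct_transpose_mulVec, dotProduct_comm]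

lemma σ_mul_dotProduct_le {Q : Matrix n n ℝ} (hQ : Qᵀ * Q = 1) (k : n) :
    S.σ k * ((Q *ᵥ S.v k) ⬝ᵥ S.u k) ≤ S.σ k :=
  mul_le_of_le_one_right (S.σ_nonneg k) <| dotProduct_le_one
    ((S.isOrthonormal_v.mulVec hQ).dotProduct_self k) (S.isOrthonormal_u.dotProduct_self k)

lemma trace_transpose_mul_le {Q : Matrix n n ℝ} (hQ : Qᵀ * Q = 1) :
    (Qᵀ * B).trace ≤ ∑ k, S.σ k := by
  rw [S.trace_transpose_mul]
  exact Finset.sum_le_sum fun k _ => S.σ_mul_dotProduct_le hQ k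

lemma trace_transpose_mul_eq_iff {Q : Matrix n n ℝ} (hQ : Qᵀ * Q = 1) :
    (Qᵀ * B).trace = ∑ k, S.σ k ↔ ∀ k, S.σ k ≠ 0 → Q *ᵥ S.v k = S.u k := by
  have hQv := S.isOrthonormal_v.mulVec hQ
  rw [S.trace_transpose_mul, Finset.sum_eq_sum_iff_of_le fun k _ => S.σ_mul_dotProduct_le hQ k]
  refine forall_congr' fun k => ?_
  simp only [Finset.mem_univ, true_implies]
  refine ⟨fun h hk => ?_, fun h => ?_⟩
  · exact eq_of_dotProduct_eq_one (hQv.dotProduct_self k) (S.isOrthonormal_u.dotProduct_self k)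
      ((mul_eq_left₀ hk).mp h)
  · rcases eq_or_ne (S.σ k) 0 with h0 | h0
    · rw [h0, zero_mul]
    · rw [h h0, S.isOrthonormal_u.dotProduct_self, mul_one]

theorem mem_orthogonalTraceMaximizers_iff {Q : Matrix n n ℝ} :
    Q ∈ orthogonalTraceMaximizers B ↔ Qᵀ * Q = 1 ∧ ∀ k, S.σ k ≠ 0 → Q *ᵥ S.v k = S.u k := by
  refine ⟨fun ⟨hQ, hmax⟩ => ⟨hQ, ?_⟩, fun ⟨hQ, hQv⟩ => ⟨hQ, fun Q' hQ' => ?_⟩⟩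
  · obtain ⟨Q₀, hQ₀, hQ₀v⟩ := S.isOrthonormal_v.exists_orthogonal_mulVec_eq S.isOrthonormal_u
    have h₀ := (S.trace_transpose_mul_eq_iff hQ₀).mpr fun k _ => hQ₀v k
    exact (S.trace_transpose_mul_eq_iff hQ).mp
      (le_antisymm (S.trace_transpose_mul_le hQ) (h₀ ▸ hmax Q₀ hQ₀))
  · rw [(S.trace_transpose_mul_eq_iff hQ).mpr hQv]
    exact S.trace_transpose_mul_le hQ'

lemma mulVec_mulVec_v_eq_zero {m : Type*} [Fintype m] {N : Matrix m n ℝ}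
    (hN : ∀ k, S.σ k = 0 → N *ᵥ S.u k = 0) {Q : Matrix n n ℝ}
    (hQ : Q ∈ orthogonalTraceMaximizers B) {k : n} (hk : S.σ k = 0) :
    N *ᵥ (Q *ᵥ S.v k) = 0 := by
  obtain ⟨hQo, hQv⟩ := S.mem_orthogonalTraceMaximizers_iff.mp hQ
  rw [← S.isOrthonormal_u.sum_dotProduct_smul (Q *ᵥ S.v k), mulVec_sum]
  refine Finset.sum_eq_zero fun j _ => ?_
  rw [mulVec_smul]
  rcases eq_or_ne (S.σ j) 0 with hj | hj
  · rw [hN j hj, smul_zero]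
  · rw [← hQv j hj, mulVec_dotProduct_mulVec_of_orthogonal hQo,
      S.isOrthonormal_v.dotProduct_of_ne (by rintro rfl; exact hj hk), zero_smul]

/-- Flipping the sign of `u k` when `σ k = 0` yields a second maximizer. -/
theorem forall_mul_eq_mul_iff {m : Type*} [Fintype m] (N : Matrix m n ℝ) :
    (∀ Q ∈ orthogonalTraceMaximizers B, ∀ Q' ∈ orthogonalTraceMaximizers B, N * Q = N * Q') ↔
      ∀ k, S.σ k = 0 → N *ᵥ S.u k = 0 := by
  refine ⟨fun h k hk => ?_, fun hN Q hQ Q' hQ' => S.isOrthonormal_v.ext_mulVec fun k => ?_⟩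
  · obtain ⟨Q₀, hQ₀, hQ₀v⟩ := S.isOrthonormal_v.exists_orthogonal_mulVec_eq S.isOrthonormal_u
    obtain ⟨Q₁, hQ₁, hQ₁v⟩ :=
      S.isOrthonormal_v.exists_orthogonal_mulVec_eq (S.isOrthonormal_u.update_neg k)
    have hmem₀ : Q₀ ∈ orthogonalTraceMaximizers B :=
      S.mem_orthogonalTraceMaximizers_iff.mpr ⟨hQ₀, fun j _ => hQ₀v j⟩
    have hmem₁ : Q₁ ∈ orthogonalTraceMaximizers B :=
      S.mem_orthogonalTraceMaximizers_iff.mpr ⟨hQ₁, fun j hj => by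
        rw [hQ₁v, Function.update_of_ne (by rintro rfl; exact hj hk)]⟩
    have h := congrArg (· *ᵥ S.v k) (h Q₀ hmem₀ Q₁ hmem₁)
    simp only [← mulVec_mulVec, hQ₀v, hQ₁v, Function.update_self, mulVec_neg] at h
    exact self_eq_neg.mp h
  · rw [← mulVec_mulVec, ← mulVec_mulVec]
    rcases eq_or_ne (S.σ k) 0 with hk | hk
    · rw [S.mulVec_mulVec_v_eq_zero hN hQ hk, S.mulVec_mulVec_v_eq_zero hN hQ' hk]
    · rw [(S.mem_orthogonalTraceMaximizers_iff.mp hQ).2 k hk,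
        (S.mem_orthogonalTraceMaximizers_iff.mp hQ').2 k hk]

theorem forall_mulVec_u_eq_zero_iff {m : Type*} [Fintype m] (N : Matrix m n ℝ) :
    (∀ k, S.σ k = 0 → N *ᵥ S.u k = 0) ↔
      LinearMap.range Nᵀ.mulVecLin ≤ LinearMap.range B.mulVecLin := by
  refine ⟨?_, fun h k hk => ?_⟩
  · rintro hN _ ⟨z, rfl⟩
    rw [mulVecLin_apply, ← S.isOrthonormal_u.sum_dotProduct_smul (Nᵀ *ᵥ z)]
    refine Submodule.sum_mem _ fun k _ => ?_
    rcases eq_or_ne (S.σ k) 0 with hk | hk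
    · rw [dotProduct_transpose_mulVec, hN k hk, dotProduct_zero, zero_smul]
      exact zero_mem _
    · refine Submodule.smul_mem _ _ ⟨(S.σ k)⁻¹ • S.v k, ?_⟩
      rw [mulVecLin_apply, mulVec_smul, S.mulVec_v, smul_smul, inv_mul_cancel₀ hk, one_smul]
  · obtain ⟨x, hx⟩ := h ⟨N *ᵥ S.u k, rfl⟩
    rw [mulVecLin_apply, mulVecLin_apply] at hx
    rw [← dotProduct_self_eq_zero, ← dotProduct_transpose_mulVec, ← hx, dotProduct_mulVec,
      ← mulVec_transpose, S.transpose_mulVec_u, hk, zero_smul, zero_dotProduct]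

end SingularSystem

theorem orthogonalTraceMaximizers_nonempty (B : Matrix n n ℝ) :
    (orthogonalTraceMaximizers B).Nonempty := by
  obtain ⟨S⟩ := SingularSystem.nonempty B
  obtain ⟨Q, hQ, hQv⟩ := S.isOrthonormal_v.exists_orthogonal_mulVec_eq S.isOrthonormal_u
  exact ⟨Q, S.mem_orthogonalTraceMaximizers_iff.mpr ⟨hQ, fun k _ => hQv k⟩⟩

theorem sum_trace_le_sum_trace_iff {ι : Type*} [Fintype ι] {B Q₀ Q : ι → Matrix n n ℝ}
    (hQ₀ : ∀ t, Q₀ t ∈ orthogonalTraceMaximizers (B t)) (hQ : ∀ t, (Q t)ᵀ * Q t = 1) :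
    ∑ t, ((Q₀ t)ᵀ * B t).trace ≤ ∑ t, ((Q t)ᵀ * B t).trace ↔
      ∀ t, Q t ∈ orthogonalTraceMaximizers (B t) := by
  have hle : ∀ t ∈ Finset.univ, ((Q t)ᵀ * B t).trace ≤ ((Q₀ t)ᵀ * B t).trace :=
    fun t _ => (hQ₀ t).2 _ (hQ t)
  refine ⟨fun h t => ⟨hQ t, fun Q' hQ' => ?_⟩,
    fun h => Finset.sum_le_sum fun t _ => (h t).2 _ (hQ₀ t).1⟩
  have heq := (Finset.sum_eq_sum_iff_of_le hle).mp (le_antisymm (Finset.sum_le_sum hle) h) t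
    (Finset.mem_univ t)
  exact heq ▸ (hQ₀ t).2 Q' hQ'

theorem forall_mul_eq_mul_of_mem_orthogonalTraceMaximizers_iff {m : Type*} [Fintype m]
    (N C : Matrix m n ℝ) :
    (∀ Q ∈ orthogonalTraceMaximizers (Nᵀ * C), ∀ Q' ∈ orthogonalTraceMaximizers (Nᵀ * C),
      N * Q = N * Q') ↔ (Nᵀ * N).rank = (Nᵀ * C).rank := by
  obtain ⟨S⟩ := SingularSystem.nonempty (Nᵀ * C)
  rw [S.forall_mul_eq_mul_iff, S.forall_mulVec_u_eq_zero_iff,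
    rank_transpose_mul_self_eq_iff_range_le]

end Matrix

section Frobenius

variable {m n : Type*} [Fintype m] [Fintype n]

lemma frobNorm_nonneg (A : Matrix m n ℝ) : 0 ≤ frobNorm A :=
  Real.sqrt_nonneg _

lemma frobNorm_sq (A : Matrix m n ℝ) : frobNorm A ^ 2 = (Aᵀ * A).trace := by
  rw [frobNorm, Real.sq_sqrt (by positivity), trace, Finset.sum_comm]
  simp [mul_apply, sq]

lemma frobNorm_sub_mul_sq [DecidableEq n] (L M : Matrix m n ℝ) {O : Matrix n n ℝ}
    (hO : Oᵀ * O = 1) :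
    frobNorm (L - M * O) ^ 2 = (Lᵀ * L).trace + (Mᵀ * M).trace - 2 * (Oᵀ * (Mᵀ * L)).trace := by
  have hcross : (Lᵀ * (M * O)).trace = (Oᵀ * (Mᵀ * L)).trace := by
    rw [← trace_transpose, transpose_mul, transpose_mul, Matrix.mul_assoc, transpose_transpose]
  have hquad : ((M * O)ᵀ * (M * O)).trace = (Mᵀ * M).trace := by
    rw [transpose_mul, Matrix.mul_assoc, trace_mul_comm, Matrix.mul_assoc, Matrix.mul_assoc,
      mul_eq_one_comm.mp hO, Matrix.mul_one]
  rw [frobNorm_sq, transpose_sub, Matrix.sub_mul, Matrix.mul_sub, Matrix.mul_sub, trace_sub,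
    trace_sub, trace_sub, hcross, hquad, transpose_mul, Matrix.mul_assoc]
  ring

end Frobenius

/-- `diag(f 0, …, f (T - 1))`. Mathlib's `blockDiagonal` indexes by (row in block, block), so the
two factors of the index are swapped. -/
def blkDiag {d T : ℕ} (f : Fin T → Matrix (Fin d) (Fin d) ℝ) : Mat d T :=
  (blockDiagonal f).submatrix (Equiv.prodComm _ _) (Equiv.prodComm _ _)

section BlockDiagonal

variable {d T : ℕ}

lemma blkDiag_apply (f : Fin T → Matrix (Fin d) (Fin d) ℝ) (t s : Fin T) (i j : Fin d) :
    blkDiag f (t, i) (s, j) = if t = s then f t i j else 0 :=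
  rfl

@[simp]
lemma blk_blkDiag (f : Fin T → Matrix (Fin d) (Fin d) ℝ) (t : Fin T) :
    blk (blkDiag f) t = f t := by
  ext i j
  simp [blk, blkDiag_apply]

lemma transpose_blkDiag_mul_blkDiag (f g : Fin T → Matrix (Fin d) (Fin d) ℝ) :
    (blkDiag f)ᵀ * blkDiag g = blkDiag fun t => (f t)ᵀ * g t := by
  rw [blkDiag, blkDiag, blkDiag, transpose_submatrix, submatrix_mul_equiv,
    blockDiagonal_transpose, ← blockDiagonal_mul]

lemma blkDiag_injective : Function.Injective (blkDiag (d := d) (T := T)) :=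
  Function.LeftInverse.injective (g := fun A t => blk A t) fun f => funext (blk_blkDiag f)

lemma blkDiag_one : blkDiag (1 : Fin T → Matrix (Fin d) (Fin d) ℝ) = 1 := by
  rw [blkDiag, blockDiagonal_one, submatrix_one_equiv]

lemma memO_blkDiag_iff {f : Fin T → Matrix (Fin d) (Fin d) ℝ} :
    memO (blkDiag f) ↔ ∀ t, (f t)ᵀ * f t = 1 := by
  have hoff : ∀ t s i j, t ≠ s → blkDiag f (t, i) (s, j) = 0 := fun t s i j h => if_neg h
  rw [memO, transpose_blkDiag_mul_blkDiag, and_iff_right hoff, ← blkDiag_one,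
    blkDiag_injective.eq_iff, funext_iff]
  rfl

lemma eq_blkDiag_of_memO {O : Mat d T} (hO : memO O) : O = blkDiag (blk O) := by
  ext ⟨t, i⟩ ⟨s, j⟩
  rw [blkDiag_apply]
  split_ifs with h
  · subst h; rfl
  · exact hO.1 t s i j h

lemma memO_iff {O : Mat d T} :
    memO O ↔ ∃ f : Fin T → Matrix (Fin d) (Fin d) ℝ, (∀ t, (f t)ᵀ * f t = 1) ∧ blkDiag f = O := by
  refine ⟨fun hO => ⟨blk O, ?_, (eq_blkDiag_of_memO hO).symm⟩,
    fun ⟨_, hf, hfO⟩ => hfO ▸ memO_blkDiag_iff.mpr hf⟩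
  rw [← memO_blkDiag_iff, ← eq_blkDiag_of_memO hO]
  exact hO

lemma colBlk_mul_blkDiag (M : Mat d T) (f : Fin T → Matrix (Fin d) (Fin d) ℝ) (t : Fin T) :
    colBlk (M * blkDiag f) t = colBlk M t * f t := by
  ext p j
  simp [colBlk, mul_apply, Fintype.sum_prod_type, blkDiag_apply]

lemma ext_colBlk {A A' : Mat d T} (h : ∀ t, colBlk A t = colBlk A' t) : A = A' := by
  ext p ⟨t, j⟩
  exact congrFun (congrFun (h t) p) j

lemma blk_transpose_mul (A B : Mat d T) (t : Fin T) :
    blk (Aᵀ * B) t = (colBlk A t)ᵀ * colBlk B t :=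
  rfl

lemma trace_transpose_blkDiag_mul (f : Fin T → Matrix (Fin d) (Fin d) ℝ) (A : Mat d T) :
    ((blkDiag f)ᵀ * A).trace = ∑ t, ((f t)ᵀ * blk A t).trace := by
  simp [trace, mul_apply, Fintype.sum_prod_type, blkDiag_apply, blk]

end BlockDiagonal

section Optimizers

variable {d T : ℕ}

lemma frobNorm_sub_mul_blkDiag_sq (L M : Mat d T) {f : Fin T → Matrix (Fin d) (Fin d) ℝ}
    (hf : ∀ t, (f t)ᵀ * f t = 1) :
    frobNorm (L - M * blkDiag f) ^ 2 =
      (Lᵀ * L).trace + (Mᵀ * M).trace - 2 * ∑ t, ((f t)ᵀ * blk (Mᵀ * L) t).trace := by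
  rw [frobNorm_sub_mul_sq L M (memO_blkDiag_iff.mpr hf).2, trace_transpose_blkDiag_mul]

lemma frobNorm_sub_mul_blkDiag_le_iff (L M : Mat d T) {f g : Fin T → Matrix (Fin d) (Fin d) ℝ}
    (hf : ∀ t, (f t)ᵀ * f t = 1) (hg : ∀ t, (g t)ᵀ * g t = 1) :
    frobNorm (L - M * blkDiag f) ≤ frobNorm (L - M * blkDiag g) ↔
      ∑ t, ((g t)ᵀ * blk (Mᵀ * L) t).trace ≤ ∑ t, ((f t)ᵀ * blk (Mᵀ * L) t).trace := by
  rw [← sq_le_sq₀ (frobNorm_nonneg _) (frobNorm_nonneg _), frobNorm_sub_mul_blkDiag_sq L M hf,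
    frobNorm_sub_mul_blkDiag_sq L M hg]
  constructor <;> intro h <;> linarith

theorem OStar_eq_image_blkDiag (L M : Mat d T) :
    OStar L M = blkDiag '' Set.univ.pi fun t => orthogonalTraceMaximizers (blk (Mᵀ * L) t) := by
  choose f₀ hf₀ using fun t => orthogonalTraceMaximizers_nonempty (blk (Mᵀ * L) t)
  have hf₀o : ∀ t, (f₀ t)ᵀ * f₀ t = 1 := fun t => (hf₀ t).1
  have hle : ∀ f : Fin T → Matrix (Fin d) (Fin d) ℝ, (∀ t, (f t)ᵀ * f t = 1) →
      frobNorm (L - M * blkDiag f₀) ≤ frobNorm (L - M * blkDiag f) := fun f hf =>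
    (frobNorm_sub_mul_blkDiag_le_iff L M hf₀o hf).mpr
      (Finset.sum_le_sum fun t _ => (hf₀ t).2 _ (hf t))
  have hdist : dABW L M = frobNorm (L - M * blkDiag f₀) := by
    refine IsLeast.csInf_eq ⟨⟨_, memO_blkDiag_iff.mpr hf₀o, rfl⟩, ?_⟩
    rintro _ ⟨O, hO, rfl⟩
    obtain ⟨f, hf, rfl⟩ := memO_iff.mp hO
    exact hle f hf
  ext P
  simp only [OStar, Set.mem_ofPred_eq, Set.mem_image, Set.mem_univ_pi, hdist]
  constructor
  · rintro ⟨hP, hPd⟩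
    obtain ⟨f, hf, rfl⟩ := memO_iff.mp hP
    exact ⟨f, (sum_trace_le_sum_trace_iff hf₀ hf).mp
      ((frobNorm_sub_mul_blkDiag_le_iff L M hf hf₀o).mp hPd.le), rfl⟩
  · rintro ⟨f, hf, rfl⟩
    have hfo : ∀ t, (f t)ᵀ * f t = 1 := fun t => (hf t).1
    refine ⟨memO_blkDiag_iff.mpr hfo, le_antisymm ?_ (hle f hfo)⟩
    exact (frobNorm_sub_mul_blkDiag_le_iff L M hfo hf₀o).mpr
      ((sum_trace_le_sum_trace_iff hf₀ hfo).mpr hf)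

theorem exists_image_mul_blkDiag_eq_singleton_iff (M : Mat d T)
    {S : Fin T → Set (Matrix (Fin d) (Fin d) ℝ)} (hS : ∀ t, (S t).Nonempty) :
    (∃ X, {Y | ∃ P ∈ blkDiag '' Set.univ.pi S, Y = M * P} = {X}) ↔
      ∀ t, ∀ Q ∈ S t, ∀ Q' ∈ S t, colBlk M t * Q = colBlk M t * Q' := by
  choose f₀ hf₀ using hS
  simp only [Set.eq_singleton_iff_unique_mem, Set.mem_ofPred_eq, Set.mem_image, Set.mem_univ_pi]
  constructor
  · rintro ⟨X, -, hX⟩ t Q hQ Q' hQ'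
    have hupdate : ∀ Q ∈ S t, M * blkDiag (Function.update f₀ t Q) = X := fun Q hQ => by
      refine hX _ ⟨_, ⟨_, fun s => ?_, rfl⟩, rfl⟩
      rcases eq_or_ne s t with rfl | hs
      · simpa using hQ
      · simpa [hs] using hf₀ s
    simpa [colBlk_mul_blkDiag] using
      congrArg (colBlk · t) ((hupdate Q hQ).trans (hupdate Q' hQ').symm)
  · intro h
    refine ⟨M * blkDiag f₀, ⟨_, ⟨f₀, hf₀, rfl⟩, rfl⟩, ?_⟩
    rintro _ ⟨_, ⟨f, hf, rfl⟩, rfl⟩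
    exact ext_colBlk fun t => by
      rw [colBlk_mul_blkDiag, colBlk_mul_blkDiag, h t _ (hf t) _ (hf₀ t)]

end Optimizers

theorem stmt13_general (d T : ℕ) (L M : Mat d T) :
    (∃ X : Mat d T, {Y : Mat d T | ∃ P ∈ OStar L M, Y = M * P} = {X}) ↔
    (∀ t : Fin T, (blk (Mᵀ * M) t).rank = (blk (Mᵀ * L) t).rank) := by
  rw [OStar_eq_image_blkDiag, exists_image_mul_blkDiag_eq_singleton_iff M
    fun t => orthogonalTraceMaximizers_nonempty _]
  refine forall_congr' fun t => ?_
  rw [blk_transpose_mul, blk_transpose_mul, forall_mul_eq_mul_of_mem_orthogonalTraceMaximizers_iff]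

/-- `{M P : P ∈ 𝐎*(L,M)}` is a singleton iff
`rk((MᵀM)_{t,t}) = rk((MᵀL)_{t,t})` for all `t`. -/
theorem stmt13 (d T : ℕ) (hd : 0 < d) (hT : 0 < T) (L M : Mat d T)
    (hL : memL L) (hM : memL M) :
    (∃ X : Mat d T, {Y : Mat d T | ∃ P ∈ OStar L M, Y = M * P} = {X}) ↔
    (∀ t : Fin T, (blk (Mᵀ * M) t).rank = (blk (Mᵀ * L) t).rank) :=
  stmt13_general d T L M
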